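/- arXiv:2405.11973 — 4 statements merged into one kernel-verified Lean document; each statement's English description precedes it below -/
import Mathlib

section
/- If a fair coin is tossed repeatedly until the total number of heads so far is odd and the total number of tails so far is even, then the expected number of tosses is 3. -/
/-!
The first stopping time is odd, because the heads and the tails among the first `t` tosses
add up to `t`. Stopping first at time `2k+1` means that the number of tails is odd at the times
`1, 3, …, 2k-1` and even at time `2k+1`. Every prescribed pattern of tail parities at the odd
times `1, 3, …, 2k+1` is realised by exactly `2^k` of the `2^(2k+1)` toss sequences: the first
toss is forced, and each later pair of tosses flips the parity iff it is mixed, which leaves two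
choices for the pair. Hence `P(T = 2k+1) = 2^(-(k+1))`, and `E T = ∑ (2k+1) / 2^(k+1) = 3`.
-/

/-- Among the first `s` tosses of the length-`t` toss sequence `v` (`true` = heads,
`false` = tails), the number of heads is odd and the number of tails is even. -/
def stopsAt {t : ℕ} (v : Fin t → Bool) (s : ℕ) : Prop :=
  Odd (Finset.univ.filter fun i : Fin t => (i : ℕ) < s ∧ v i = true).card ∧
  Even (Finset.univ.filter fun i : Fin t => (i : ℕ) < s ∧ v i = false).card

open Finset

def heads {t : ℕ} (v : Fin t → Bool) (s : ℕ) : ℕ := #{i : Fin t | (i : ℕ) < s ∧ v i = true}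

def tails {t : ℕ} (v : Fin t → Bool) (s : ℕ) : ℕ := #{i : Fin t | (i : ℕ) < s ∧ v i = false}

theorem heads_add_tails {t : ℕ} (v : Fin t → Bool) {s : ℕ} (hs : s ≤ t) :
    heads v s + tails v s = s := by
  have := card_filter_add_card_filter_not (s := {i : Fin t | (i : ℕ) < s}) (fun i => v i = true)
  simp only [filter_filter, Bool.not_eq_true, Fin.card_filter_val_lt, min_eq_right hs] at this
  exact this

theorem stopsAt_iff_odd_and_even_tails {t : ℕ} (v : Fin t → Bool) {s : ℕ} (hs : s ≤ t) :
    stopsAt v s ↔ Odd s ∧ Even (tails v s) := by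
  have h : Odd s ↔ (Odd (heads v s) ↔ Even (tails v s)) := by
    rw [← Nat.odd_add, heads_add_tails v hs]
  change Odd (heads v s) ∧ Even (tails v s) ↔ _
  tauto

theorem odd_of_stopsAt {t : ℕ} {v : Fin t → Bool} {s : ℕ} (hs : s ≤ t) (h : stopsAt v s) :
    Odd s :=
  ((stopsAt_iff_odd_and_even_tails v hs).1 h).1

theorem tails_eq_sum {t : ℕ} (v : Fin t → Bool) (s : ℕ) :
    tails v s = ∑ i : Fin t, if (i : ℕ) < s ∧ v i = false then 1 else 0 :=
  card_filter _ _

theorem tails_of_le {t : ℕ} (v : Fin t → Bool) {s : ℕ} (hs : t ≤ s) : tails v s = tails v t := by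
  simp only [tails_eq_sum]
  refine sum_congr rfl fun i _ => ?_
  simp [i.isLt, i.isLt.trans_le hs]

theorem tails_snoc {n : ℕ} (v : Fin n → Bool) (b : Bool) (s : ℕ) :
    tails (Fin.snoc v b : Fin (n + 1) → Bool) s =
      tails v s + if n < s ∧ b = false then 1 else 0 := by
  rw [tails_eq_sum, tails_eq_sum, Fin.sum_univ_castSucc]
  simp

theorem tails_snoc_of_le {n : ℕ} (v : Fin n → Bool) (b : Bool) {s : ℕ} (hs : s ≤ n) :
    tails (Fin.snoc v b : Fin (n + 1) → Bool) s = tails v s := by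
  simp [tails_snoc, hs.not_gt]

theorem odd_tails_snoc_snoc {n : ℕ} (v : Fin n → Bool) (b c : Bool) :
    Odd (tails (Fin.snoc (Fin.snoc v b : Fin (n + 1) → Bool) c : Fin (n + 2) → Bool) (n + 2)) ↔
      (Odd (tails v n) ↔ b = c) := by
  rw [tails_snoc, tails_of_le _ (Nat.le_succ _), tails_snoc, tails_of_le _ (Nat.le_succ _)]
  cases b <;> cases c <;> simp [Nat.odd_add_one, parity_simps]

theorem card_bool_pair_parity (p r : Prop) :
    Nat.card {bc : Bool × Bool // (p ↔ bc.1 = bc.2) ↔ r} = 2 := by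
  classical
  rw [Nat.card_eq_fintype_card]
  by_cases hp : p <;> by_cases hr : r <;> simp only [hp, hr, true_iff, false_iff, iff_true, iff_false, not_not] <;> decide

theorem Nat.card_subtype_prod_eq_mul {α β : Type*} [Finite α] [Finite β] (P : α → Prop)
    (R : α → β → Prop) {m : ℕ} (h : ∀ a, P a → Nat.card {b // R a b} = m) :
    Nat.card {x : α × β // P x.1 ∧ R x.1 x.2} = Nat.card {a // P a} * m := by
  have := Fintype.ofFinite {a // P a}
  let e : {x : α × β // P x.1 ∧ R x.1 x.2} ≃ Σ a : {a // P a}, {b // R a b} :=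
    { toFun x := ⟨⟨x.1.1, x.2.1⟩, ⟨x.1.2, x.2.2⟩⟩
      invFun y := ⟨(y.1.1, y.2.1), y.1.2, y.2.2⟩
      left_inv _ := rfl
      right_inv _ := rfl }
  rw [Nat.card_congr e, Nat.card_sigma, sum_congr rfl fun a _ => h a.1 a.2, sum_const,
    Finset.card_univ, smul_eq_mul, Nat.card_eq_fintype_card]

theorem tails_parity_pattern_snoc_snoc (ε : ℕ → Prop) {k : ℕ} (w : Fin (2 * k + 1) → Bool)
    (b c : Bool) :
    (∀ j ≤ k + 1, (Odd (tails (Fin.snoc (Fin.snoc w b : Fin (2 * k + 2) → Bool) c :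
        Fin (2 * (k + 1) + 1) → Bool) (2 * j + 1)) ↔ ε j)) ↔
      (∀ j ≤ k, (Odd (tails w (2 * j + 1)) ↔ ε j)) ∧
        ((Odd (tails w (2 * k + 1)) ↔ b = c) ↔ ε (k + 1)) := by
  simp only [Nat.le_succ_iff, or_imp, forall_and, forall_eq]
  refine and_congr (forall₂_congr fun j hj => ?_) ?_
  · rw [tails_snoc_of_le _ _ (by omega), tails_snoc_of_le _ _ (by omega)]
  · rw [← odd_tails_snoc_snoc]
    exact Iff.rfl

theorem card_tails_parity_pattern (ε : ℕ → Prop) (k : ℕ) :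
    Nat.card {v : Fin (2 * k + 1) → Bool // ∀ j ≤ k, (Odd (tails v (2 * j + 1)) ↔ ε j)} =
      2 ^ k := by
  induction k with
  | zero =>
    have h (v : Fin 1 → Bool) :
        (∀ j ≤ 0, (Odd (tails v (2 * j + 1)) ↔ ε j)) ↔ (v 0 = false ↔ ε 0) := by
      simp only [Nat.le_zero, forall_eq, mul_zero, zero_add]
      rw [tails_eq_sum, Fin.sum_univ_one]
      cases v 0 <;> simp
    rw [Nat.card_congr (Equiv.subtypeEquiv (q := fun b => b = false ↔ ε 0)
      (Equiv.funUnique (Fin 1) Bool) h)]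
    by_cases hε : ε 0 <;> simp [hε]
  | succ k ih =>
    let snocPair : (Fin (2 * k + 1) → Bool) × (Bool × Bool) ≃ (Fin (2 * (k + 1) + 1) → Bool) :=
      (Equiv.prodAssoc _ _ _).symm.trans <|
        (((Equiv.prodComm _ _).trans (Fin.snocEquiv fun _ => Bool)).prodCongr
          (Equiv.refl Bool)).trans <|
        (Equiv.prodComm _ _).trans (Fin.snocEquiv fun _ => Bool)
    rw [← Nat.card_congr (snocPair.subtypeEquiv fun x =>
        (tails_parity_pattern_snoc_snoc ε x.1 x.2.1 x.2.2).symm),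
      Nat.card_subtype_prod_eq_mul (fun w => ∀ j ≤ k, (Odd (tails w (2 * j + 1)) ↔ ε j))
        (fun w (bc : Bool × Bool) => (Odd (tails w (2 * k + 1)) ↔ bc.1 = bc.2) ↔ ε (k + 1))
        fun _ _ => card_bool_pair_parity _ _, ih, pow_succ]

theorem card_firstStop_even (k : ℕ) :
    Nat.card {v : Fin (2 * k) → Bool // stopsAt v (2 * k) ∧ ∀ s < 2 * k, ¬ stopsAt v s} = 0 :=
  have : IsEmpty {v : Fin (2 * k) → Bool // stopsAt v (2 * k) ∧ ∀ s < 2 * k, ¬ stopsAt v s} :=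
    ⟨fun ⟨_, h, _⟩ => Nat.not_odd_iff_even.2 (even_two_mul k) (odd_of_stopsAt le_rfl h)⟩
  Nat.card_of_isEmpty

theorem stopsAt_first_iff {k : ℕ} (v : Fin (2 * k + 1) → Bool) :
    (stopsAt v (2 * k + 1) ∧ ∀ s < 2 * k + 1, ¬ stopsAt v s) ↔
      ∀ j ≤ k, (Odd (tails v (2 * j + 1)) ↔ j < k) := by
  have hbefore : (∀ s < 2 * k + 1, ¬ stopsAt v s) ↔ ∀ j < k, Odd (tails v (2 * j + 1)) := by
    constructor
    · intro h j hj
      have := h (2 * j + 1) (by omega)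
      rw [stopsAt_iff_odd_and_even_tails v (by omega)] at this
      simpa [Nat.not_even_iff_odd] using this
    · rintro h s hs hstop
      obtain ⟨⟨j, rfl⟩, heven⟩ := (stopsAt_iff_odd_and_even_tails v hs.le).1 hstop
      exact Nat.not_even_iff_odd.2 (h j (by omega)) heven
  rw [stopsAt_iff_odd_and_even_tails v le_rfl, hbefore]
  constructor
  · rintro ⟨⟨-, heven⟩, hodd⟩ j hj
    rcases hj.lt_or_eq with hj | rfl
    · simp [hj, hodd j hj]
    · simpa [Nat.not_odd_iff_even] using heven
  · intro h
    refine ⟨⟨odd_two_mul_add_one k, Nat.not_odd_iff_even.1 fun hodd => ?_⟩,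
      fun j hj => (h j hj.le).2 hj⟩
    exact lt_irrefl k ((h k le_rfl).1 hodd)

theorem card_firstStop_odd (k : ℕ) :
    Nat.card {v : Fin (2 * k + 1) → Bool //
      stopsAt v (2 * k + 1) ∧ ∀ s < 2 * k + 1, ¬ stopsAt v s} = 2 ^ k := by
  rw [← card_tails_parity_pattern (· < k) k]
  exact Nat.card_congr (Equiv.subtypeEquivRight stopsAt_first_iff)

theorem hasSum_two_mul_add_one_div_two_pow :
    HasSum (fun k : ℕ => (2 * k + 1 : ℝ) / 2 ^ (k + 1)) 3 := by
  have hk : HasSum (fun k : ℕ => (k : ℝ) * (1 / 2) ^ k) 2 := by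
    have h := hasSum_coe_mul_geometric_of_norm_lt_one (𝕜 := ℝ) (r := 1 / 2) (by norm_num)
    rwa [show (1 / 2 : ℝ) / (1 - 1 / 2) ^ 2 = 2 by norm_num] at h
  have h1 : HasSum (fun k : ℕ => (1 / 2 : ℝ) ^ k / 2) 1 := by
    simpa using hasSum_geometric_two.div_const 2
  convert hk.add h1 using 1
  · ext k
    rw [div_pow, one_pow]
    field_simp
    ring
  · norm_num

/-- `P(T = t)` is encoded as the number of length-`t` toss sequences that stop first at time `t`,
divided by `2^t`. -/
theorem expected_tosses_eq_three :
    ∑' t : ℕ, (t : ℝ) *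
      (Nat.card {v : Fin t → Bool // stopsAt v t ∧ ∀ s < t, ¬ stopsAt v s} : ℝ) / 2 ^ t
      = 3 := by
  refine (HasSum.even_add_odd ?_ ?_).tsum_eq.trans (zero_add 3)
  · simp only [card_firstStop_even, Nat.cast_zero, mul_zero, zero_div]
    exact hasSum_zero
  · simp only [card_firstStop_odd]
    convert hasSum_two_mul_add_one_div_two_pow using 2 with k
    push_cast
    field_simp
    ring
end

section
/- For all r with 0 ≤ r ≤ 1, the coefficients a_I = sqrt(4-6r+3r^2)/2 and b_I = (2-r)(1-r)/sqrt(4-6r+3r^2) are each at most 1 - r/2. -/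
theorem aI_bI_le_one_sub_half_r (r : ℝ) (h0 : 0 ≤ r) (h1 : r ≤ 1) :
    Real.sqrt (4 - 6*r + 3*r^2) / 2 ≤ 1 - r/2 ∧
    (2 - r) * (1 - r) / Real.sqrt (4 - 6*r + 3*r^2) ≤ 1 - r/2 := by
  have hpos : (0:ℝ) < 4 - 6*r + 3*r^2 := by nlinarith
  have hspos : 0 < Real.sqrt (4 - 6*r + 3*r^2) := Real.sqrt_pos.mpr hpos
  have hupper : Real.sqrt (4 - 6*r + 3*r^2) ≤ 2 - r := by
    have := Real.sqrt_le_sqrt (show 4 - 6*r + 3*r^2 ≤ (2-r)^2 by nlinarith)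
    rwa [Real.sqrt_sq (by linarith)] at this
  have hlower : 2*(1-r) ≤ Real.sqrt (4 - 6*r + 3*r^2) := by
    have := Real.sqrt_le_sqrt (show (2*(1-r))^2 ≤ 4 - 6*r + 3*r^2 by nlinarith)
    rwa [Real.sqrt_sq (by linarith)] at this
  constructor
  · linarith
  · rw [div_le_iff₀ hspos]
    nlinarith [hspos.le]
end

section
/- For all r with 0 ≤ r ≤ 1, we have b_I^2 + b_Z^2 ≤ 1, where b_I = (2-r)(1-r)/sqrt(4-6r+3r^2) and b_Z = (1-r)sqrt(r)/sqrt(2-r). -/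
theorem sum_bP_sq_le_one (r : ℝ) (h0 : 0 ≤ r) (h1 : r ≤ 1) :
    ((2 - r) * (1 - r) / Real.sqrt (4 - 6*r + 3*r^2))^2
      + ((1 - r) * Real.sqrt r / Real.sqrt (2 - r))^2 ≤ 1 := by
  have hq : (0:ℝ) < 4 - 6*r + 3*r^2 := by nlinarith [sq_nonneg (r-1), sq_nonneg r]
  have h2 : (0:ℝ) < 2 - r := by linarith
  have e1 : Real.sqrt (4 - 6*r + 3*r^2) ^ 2 = 4 - 6*r + 3*r^2 :=
    Real.sq_sqrt hq.le
  have e2 : Real.sqrt (2 - r) ^ 2 = 2 - r := Real.sq_sqrt h2.le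
  have e3 : Real.sqrt r ^ 2 = r := Real.sq_sqrt h0
  rw [div_pow, div_pow, e1, e2, mul_pow (1-r) (Real.sqrt r), e3,
    div_add_div _ _ (ne_of_gt hq) (ne_of_gt h2), div_le_one (by positivity)]
  nlinarith [sq_nonneg (r*(1-r)), sq_nonneg r, sq_nonneg (1-r), mul_nonneg h0 (sq_nonneg (1-r)), mul_nonneg (mul_nonneg h0 h0) (sq_nonneg (1-r))]
end

section
/- For all r with 0 ≤ r ≤ 1, we have c_I^2 + c_X^2 + c_Y^2 + c_Z^2 ≤ 2r, where c_I = r·sqrt(8-12r+5r^2)/(2·sqrt(4-6r+3r^2)), c_X = c_Y = sqrt(r(2-r))/2, and c_Z = r·sqrt(4-3r)/(2·sqrt(2-r)). -/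
theorem sum_cP_sq_le_two_r (r : ℝ) (h0 : 0 ≤ r) (h1 : r ≤ 1) :
    (r * Real.sqrt (8 - 12*r + 5*r^2) / (2 * Real.sqrt (4 - 6*r + 3*r^2)))^2
      + (Real.sqrt (r*(2-r)) / 2)^2 + (Real.sqrt (r*(2-r)) / 2)^2
      + (r * Real.sqrt (4 - 3*r) / (2 * Real.sqrt (2 - r)))^2 ≤ 2 * r := by
  have hA : (0:ℝ) < 4 - 6*r + 3*r^2 := by nlinarith [sq_nonneg (r-1)]
  have hB : (0:ℝ) < 2 - r := by linarith
  have h1' : (0:ℝ) ≤ 8 - 12*r + 5*r^2 := by nlinarith [sq_nonneg (r-1)]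
  have h2' : (0:ℝ) ≤ r*(2-r) := by nlinarith
  have h3' : (0:ℝ) ≤ 4 - 3*r := by linarith
  have s1 := Real.sq_sqrt h1'
  have s2 := Real.sq_sqrt h2'
  have s3 := Real.sq_sqrt h3'
  have sA := Real.sq_sqrt hA.le
  have sB := Real.sq_sqrt hB.le
  have hsA : 0 < Real.sqrt (4 - 6*r + 3*r^2) := Real.sqrt_pos.mpr hA
  have hsB : 0 < Real.sqrt (2 - r) := Real.sqrt_pos.mpr hB
  rw [div_pow, div_pow, div_pow, mul_pow, mul_pow, mul_pow, mul_pow,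
    s1, s2, s3, sA, sB]
  rw [div_add_div _ _ (by positivity) (by norm_num : (2:ℝ)^2 ≠ 0),
    div_add_div _ _ (by positivity) (by norm_num : (2:ℝ)^2 ≠ 0),
    div_add_div _ _ (by positivity) (by positivity),
    div_le_iff₀ (by positivity)]
  ring_nf
  nlinarith [sq_nonneg r, sq_nonneg (r-1), sq_nonneg (r*(r-1)), mul_nonneg h0 (sq_nonneg (r-1)), mul_nonneg (mul_nonneg h0 h0) (sq_nonneg (r-1)), mul_nonneg (mul_nonneg (mul_nonneg h0 h0) h0) (sq_nonneg (r-1))]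
end
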